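/- Let α > 1/2, d ∈ ℕ, and weights γ_u ∈ (0,1] for each u ⊆ {1,…,d}. Define r_{α,γ}(h) := γ_{supp(h)}^{-1} ∏_{j ∈ supp(h)} |h_j|^α for h ∈ ℤ^d. Order ℤ^d as h_1, h_2, … so that r_{α,γ}(h_i) is non-decreasing in i. Then there exists a constant C (depending on d, α, γ) such that for all sufficiently large i, r_{α,γ}(h_i) ≥ C · i^α / (log i)^{α(d-1)}; equivalently σ_i := r_{α,γ}(h_i)^{-1} ≲ i^{-α} (log i)^{α(d-1)}. -/

import Mathlib

open Finset

/-!
Since every weight `γ u` lies in `(0, 1]`, `r g ≥ P(g) ^ α` with `P(g) = ∏ⱼ max |gⱼ| 1`. As `h` is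
injective and `r ∘ h` monotone, `h 0, …, h i` all lie in the hyperbolic cross `{g | P(g) ≤ s}`,
`s = r (h i) ^ (1 / α)`, so `i + 1` is at most its size. Splitting off the first coordinate `t`
and summing the sizes of the `(d - 1)`-dimensional crosses of radius `s / max |t| 1` shows
that this size is `O(s (1 + log s) ^ (d - 1))`, the harmonic sum over `t` producing one factor
`log s` per dimension. Solving `i ≲ s (1 + log s) ^ (d - 1)` for `s` gives the claim.
-/

lemma Real.log_natCast_le_log_natCast {a b : ℕ} (h : a ≤ b) : Real.log a ≤ Real.log b := by
  rcases Nat.eq_zero_or_pos a with rfl | ha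
  · simpa using Real.log_natCast_nonneg b
  · exact Real.log_le_log (by exact_mod_cast ha) (by exact_mod_cast h)

lemma sum_Icc_natAbs_le (m : ℕ) {f : ℕ → ℝ} (hf : ∀ k, 0 ≤ f k) :
    ∑ t ∈ Icc (-(m : ℤ)) m, f t.natAbs ≤ 2 * ∑ k ∈ range (m + 1), f k := by
  rw [← sum_fiberwise_of_maps_to (g := Int.natAbs) (t := range (m + 1))
    (fun t ht => by simp only [mem_Icc, mem_range] at ht ⊢; omega), mul_sum]
  refine sum_le_sum fun k _ => ?_
  have hfib : {t ∈ Icc (-(m : ℤ)) m | t.natAbs = k} ⊆ {(k : ℤ), -(k : ℤ)} := fun t ht => by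
    simp only [mem_filter] at ht; simp only [mem_insert, mem_singleton]; omega
  calc ∑ t ∈ Icc (-(m : ℤ)) m with t.natAbs = k, f t.natAbs
      = #{t ∈ Icc (-(m : ℤ)) m | t.natAbs = k} * f k := by
        rw [sum_congr rfl fun t ht => by rw [(mem_filter.mp ht).2], sum_const, nsmul_eq_mul]
    _ ≤ 2 * f k := by
        gcongr
        · exact hf k
        · exact_mod_cast (card_le_card hfib).trans card_le_two

lemma sum_range_inv_max_one_le (m : ℕ) :
    ∑ k ∈ range (m + 1), ((max k 1 : ℕ) : ℝ)⁻¹ ≤ 2 + Real.log m := by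
  have hH := harmonic_le_one_add_log m
  rw [harmonic] at hH
  rw [sum_range_succ']
  push_cast at hH ⊢
  have hmax : ∀ x : ℕ, max ((x : ℝ) + 1) 1 = x + 1 := fun x => max_eq_left (by simp)
  simp only [hmax, max_eq_right zero_le_one, inv_one]
  linarith

lemma sum_Icc_inv_max_natAbs_one_le (m : ℕ) :
    ∑ t ∈ Icc (-(m : ℤ)) m, ((max t.natAbs 1 : ℕ) : ℝ)⁻¹ ≤ 4 * (1 + Real.log m) := by
  have := sum_Icc_natAbs_le m (f := fun k => ((max k 1 : ℕ) : ℝ)⁻¹) (fun k => by positivity)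
  linarith [sum_range_inv_max_one_le m, Real.log_natCast_nonneg m]

def hyperbolicWeight {d : ℕ} (g : Fin d → ℤ) : ℕ := ∏ j, max (g j).natAbs 1

lemma one_le_hyperbolicWeight {d : ℕ} (g : Fin d → ℤ) : 1 ≤ hyperbolicWeight g :=
  one_le_prod' fun _ _ => le_max_right _ _

lemma natAbs_le_hyperbolicWeight {d : ℕ} (g : Fin d → ℤ) (j : Fin d) :
    (g j).natAbs ≤ hyperbolicWeight g :=
  (le_max_left _ _).trans <|
    single_le_prod' (f := fun j => max (g j).natAbs 1) (fun _ _ => le_max_right _ _) (mem_univ j)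

lemma hyperbolicWeight_cons {d : ℕ} (t : ℤ) (g : Fin d → ℤ) :
    hyperbolicWeight (Fin.cons t g : Fin (d + 1) → ℤ) = max t.natAbs 1 * hyperbolicWeight g :=
  Fin.prod_univ_succ _

/-- The box `[-m, m] ^ d` only makes the set finite: see `mem_hyperbolicCross`. -/
noncomputable def hyperbolicCross (d m : ℕ) : Finset (Fin d → ℤ) :=
  {g ∈ Fintype.piFinset fun _ => Icc (-(m : ℤ)) m | hyperbolicWeight g ≤ m}

lemma mem_hyperbolicCross {d m : ℕ} {g : Fin d → ℤ} :
    g ∈ hyperbolicCross d m ↔ hyperbolicWeight g ≤ m := by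
  refine mem_filter.trans ⟨And.right, fun hg => ⟨Fintype.mem_piFinset.mpr fun j => ?_, hg⟩⟩
  have := (natAbs_le_hyperbolicWeight g j).trans hg
  rw [mem_Icc]
  omega

lemma hyperbolicCross_zero (d : ℕ) : hyperbolicCross d 0 = ∅ :=
  eq_empty_of_forall_notMem fun g hg => by
    have := (one_le_hyperbolicWeight g).trans (mem_hyperbolicCross.mp hg)
    omega

lemma card_hyperbolicCross_succ_le (d m : ℕ) :
    #(hyperbolicCross (d + 1) m) ≤
      ∑ t ∈ Icc (-(m : ℤ)) m, #(hyperbolicCross d (m / max t.natAbs 1)) := by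
  have hcover : hyperbolicCross (d + 1) m ⊆ (Icc (-(m : ℤ)) m).biUnion fun t =>
      (hyperbolicCross d (m / max t.natAbs 1)).image (Fin.cons t) := by
    intro f hf
    rw [mem_hyperbolicCross] at hf
    have hhead := (natAbs_le_hyperbolicWeight f 0).trans hf
    rw [← Fin.cons_self_tail f, hyperbolicWeight_cons] at hf
    refine mem_biUnion.mpr
      ⟨f 0, by rw [mem_Icc]; omega, mem_image.mpr ⟨Fin.tail f, ?_, Fin.cons_self_tail f⟩⟩
    rw [mem_hyperbolicCross, Nat.le_div_iff_mul_le (by omega), mul_comm]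
    exact hf
  exact (card_le_card hcover).trans <| card_biUnion_le.trans <| sum_le_sum fun _ _ => card_image_le

lemma card_hyperbolicCross_le (d m : ℕ) :
    (#(hyperbolicCross (d + 1) m) : ℝ) ≤ 4 ^ (d + 1) * m * (1 + Real.log m) ^ d := by
  induction d generalizing m with
  | zero =>
    rcases Nat.eq_zero_or_pos m with rfl | hm
    · simp [hyperbolicCross_zero]
    have hcard : #(hyperbolicCross 1 m) ≤ 2 * m + 1 := by
      refine (card_hyperbolicCross_succ_le 0 m).trans ?_
      calc ∑ t ∈ Icc (-(m : ℤ)) m, #(hyperbolicCross 0 (m / max t.natAbs 1))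
          ≤ ∑ t ∈ Icc (-(m : ℤ)) m, 1 := sum_le_sum fun _ _ => card_le_univ _ |>.trans (by simp)
        _ = 2 * m + 1 := by simp; omega
    have hm' : (1 : ℝ) ≤ m := by exact_mod_cast hm
    have hcard' : (#(hyperbolicCross 1 m) : ℝ) ≤ 2 * m + 1 := by exact_mod_cast hcard
    simp only [zero_add, pow_one, pow_zero, mul_one]
    linarith
  | succ d ih =>
    set L := 1 + Real.log m
    have hL : 0 ≤ L := by positivity
    have hterm : ∀ t ∈ Icc (-(m : ℤ)) m, (#(hyperbolicCross (d + 1) (m / max t.natAbs 1)) : ℝ) ≤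
        4 ^ (d + 1) * m * L ^ d * ((max t.natAbs 1 : ℕ) : ℝ)⁻¹ := by
      intro t _
      have hlog := Real.log_natCast_le_log_natCast (Nat.div_le_self m (max t.natAbs 1))
      calc (#(hyperbolicCross (d + 1) (m / max t.natAbs 1)) : ℝ)
          ≤ 4 ^ (d + 1) * ((m / max t.natAbs 1 : ℕ) : ℝ) *
              (1 + Real.log ((m / max t.natAbs 1 : ℕ) : ℝ)) ^ d := ih _
        _ ≤ 4 ^ (d + 1) * (m / ((max t.natAbs 1 : ℕ) : ℝ)) * L ^ d := by
          gcongr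
          · exact Nat.cast_div_le
          · linarith
        _ = _ := by ring
    calc (#(hyperbolicCross (d + 2) m) : ℝ)
        ≤ ∑ t ∈ Icc (-(m : ℤ)) m, (#(hyperbolicCross (d + 1) (m / max t.natAbs 1)) : ℝ) := by
          exact_mod_cast card_hyperbolicCross_succ_le (d + 1) m
      _ ≤ ∑ t ∈ Icc (-(m : ℤ)) m, 4 ^ (d + 1) * m * L ^ d * ((max t.natAbs 1 : ℕ) : ℝ)⁻¹ :=
          sum_le_sum hterm
      _ ≤ 4 ^ (d + 1) * m * L ^ d * (4 * L) := by
          rw [← mul_sum]; gcongr; exact sum_Icc_inv_max_natAbs_one_le m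
      _ = 4 ^ (d + 2) * m * L ^ (d + 1) := by ring

lemma card_hyperbolicCross_floor_le (d : ℕ) {x : ℝ} (hx : 1 ≤ x) :
    (#(hyperbolicCross (d + 1) ⌊x⌋₊) : ℝ) ≤ 4 ^ (d + 1) * x * (1 + Real.log x) ^ d := by
  have hfloor : (0 : ℝ) < ⌊x⌋₊ := by exact_mod_cast Nat.floor_pos.mpr hx
  refine (card_hyperbolicCross_le d _).trans ?_
  have hle : (⌊x⌋₊ : ℝ) ≤ x := Nat.floor_le (by linarith)
  gcongr

lemma prod_rpow_abs_eq_hyperbolicWeight_rpow {d : ℕ} (g : Fin d → ℤ) (α : ℝ) :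
    ∏ j ∈ univ.filter (fun j => g j ≠ 0), ((|g j| : ℤ) : ℝ) ^ α =
      (hyperbolicWeight g : ℝ) ^ α := by
  rw [hyperbolicWeight, Nat.cast_prod, ← Real.finsetProd_rpow _ _ (fun _ _ => by positivity),
    prod_filter]
  refine prod_congr rfl fun j _ => ?_
  by_cases hj : g j = 0
  · simp [hj]
  · have : 1 ≤ (g j).natAbs := by omega
    simp [hj, this, Nat.cast_natAbs]

lemma hyperbolicWeight_rpow_le {d : ℕ} {γ : Finset (Fin d) → ℝ} (hγ : ∀ u, 0 < γ u ∧ γ u ≤ 1)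
    (g : Fin d → ℤ) (α : ℝ) :
    (hyperbolicWeight g : ℝ) ^ α ≤ (γ (univ.filter fun j => g j ≠ 0))⁻¹ *
      ∏ j ∈ univ.filter (fun j => g j ≠ 0), ((|g j| : ℤ) : ℝ) ^ α := by
  rw [prod_rpow_abs_eq_hyperbolicWeight_rpow]
  exact le_mul_of_one_le_left (by positivity) ((one_le_inv₀ (hγ _).1).mpr (hγ _).2)

lemma div_le_of_le_mul_one_add_log_pow {B x s : ℝ} (n : ℕ) (hB : 1 ≤ B) (hx : Real.exp 1 ≤ x)
    (hs : 1 ≤ s) (h : x ≤ B * s * (1 + Real.log s) ^ n) :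
    x / (2 ^ n * B * Real.log x ^ n) ≤ s := by
  have hlog : 1 ≤ Real.log x := by rwa [Real.le_log_iff_exp_le ((Real.exp_pos 1).trans_le hx)]
  have hden : 0 < 2 ^ n * B * Real.log x ^ n := by
    have : 0 < B := by linarith
    positivity
  rw [div_le_iff₀ hden]
  rcases le_total x s with hxs | hsx
  · calc x ≤ s := hxs
      _ ≤ s * (2 ^ n * B * Real.log x ^ n) :=
        le_mul_of_one_le_right (by linarith) (one_le_mul_of_one_le_of_one_le
          (one_le_mul_of_one_le_of_one_le (one_le_pow₀ one_le_two) hB) (one_le_pow₀ hlog))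
  · have : 1 + Real.log s ≤ 2 * Real.log x := by
      linarith [Real.log_le_log (by positivity) hsx]
    calc x ≤ B * s * (1 + Real.log s) ^ n := h
      _ ≤ B * s * (2 * Real.log x) ^ n := by gcongr; linarith [Real.log_nonneg hs]
      _ = s * (2 ^ n * B * Real.log x ^ n) := by ring

lemma rpow_div_le_of_le_mul_one_add_log_pow {B x s α : ℝ} (n : ℕ) (hB : 1 ≤ B)
    (hx : Real.exp 1 ≤ x) (hs : 1 ≤ s) (hα : 0 ≤ α) (h : x ≤ B * s * (1 + Real.log s) ^ n) :
    (2 ^ n * B) ^ (-α) * x ^ α / Real.log x ^ (α * n) ≤ s ^ α := by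
  have hx0 : 0 ≤ x := (Real.exp_pos 1).le.trans hx
  have hlog : 0 ≤ Real.log x := Real.log_nonneg (Real.one_le_exp zero_le_one |>.trans hx)
  calc (2 ^ n * B) ^ (-α) * x ^ α / Real.log x ^ (α * n)
      = (x / (2 ^ n * B * Real.log x ^ n)) ^ α := by
        have hB0 : 0 ≤ 2 ^ n * B := by positivity
        rw [Real.div_rpow hx0 (by positivity), Real.mul_rpow hB0 (by positivity),
          Real.rpow_neg hB0, mul_comm α, Real.rpow_natCast_mul hlog]
        ring
    _ ≤ s ^ α :=
      Real.rpow_le_rpow (by positivity) (div_le_of_le_mul_one_add_log_pow n hB hx hs h) hα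

/-- Polynomial decay of the ordered Korobov sequence: if `ℤ^d` is ordered so that
`r_{α,γ}(h_i)` is non-decreasing, then `r_{α,γ}(h_i) ≥ C i^α / (log i)^{α(d-1)}`
for all sufficiently large `i`; equivalently `σ_i ≲ i^{-α} (log i)^{α(d-1)}`. -/
theorem korobov_sigma_decay (d : ℕ) (α : ℝ) (hα : 1 / 2 < α)
    (γ : Finset (Fin d) → ℝ) (hγ : ∀ u, 0 < γ u ∧ γ u ≤ 1)
    (r : (Fin d → ℤ) → ℝ)
    (hr : ∀ h : Fin d → ℤ,
      r h = (γ (Finset.univ.filter fun j => h j ≠ 0))⁻¹ *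
        ∏ j ∈ Finset.univ.filter (fun j => h j ≠ 0), ((|h j| : ℤ) : ℝ) ^ α)
    (h : ℕ → (Fin d → ℤ)) (hbij : Function.Bijective h)
    (hmono : Monotone fun i => r (h i)) :
    ∃ C : ℝ, 0 < C ∧ ∃ i₀ : ℕ, ∀ i : ℕ, i₀ ≤ i →
      C * (i : ℝ) ^ α / Real.log i ^ (α * ((d : ℝ) - 1)) ≤ r (h i) := by
  have hα0 : 0 < α := by linarith
  obtain ⟨n, rfl⟩ : ∃ n, d = n + 1 := Nat.exists_eq_succ_of_ne_zero fun hd => by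
    subst hd; exact zero_ne_one (hbij.1 (Subsingleton.elim _ _))
  refine ⟨(2 ^ n * 4 ^ (n + 1)) ^ (-α), by positivity, 3, fun i hi => ?_⟩
  have hweight : ∀ g, (hyperbolicWeight g : ℝ) ^ α ≤ r g := fun g =>
    (hr g).symm ▸ hyperbolicWeight_rpow_le hγ g α
  have hr0 : 0 ≤ r (h i) := (Real.rpow_nonneg (Nat.cast_nonneg _) α).trans (hweight _)
  set s := r (h i) ^ α⁻¹
  have hsα : s ^ α = r (h i) := Real.rpow_inv_rpow hr0 hα0.ne'
  have hcross : ∀ k ≤ i, hyperbolicWeight (h k) ≤ ⌊s⌋₊ := fun k hk =>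
    Nat.le_floor <| (Real.rpow_le_rpow_iff (by positivity) (by positivity) hα0).mp <|
      hsα ▸ (hweight _).trans (hmono hk)
  have hs : 1 ≤ s :=
    (Nat.one_le_floor_iff _).mp ((one_le_hyperbolicWeight _).trans (hcross i le_rfl))
  have hcard : i + 1 ≤ #(hyperbolicCross (n + 1) ⌊s⌋₊) := by
    simpa using card_le_card_of_injOn h
      (fun k hk => mem_hyperbolicCross.mpr (hcross k (Nat.lt_succ_iff.mp (mem_range.mp hk))))
      hbij.1.injOn
  have hi_le : (i : ℝ) ≤ 4 ^ (n + 1) * s * (1 + Real.log s) ^ n := by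
    have : ((i + 1 : ℕ) : ℝ) ≤ #(hyperbolicCross (n + 1) ⌊s⌋₊) := by exact_mod_cast hcard
    push_cast at this
    linarith [card_hyperbolicCross_floor_le n hs]
  have hexp : Real.exp 1 ≤ i := Real.exp_one_lt_three.le.trans (by exact_mod_cast hi)
  have hbound :=
    rpow_div_le_of_le_mul_one_add_log_pow n (one_le_pow₀ (by norm_num)) hexp hs hα0.le hi_le
  rw [hsα] at hbound
  convert hbound using 4
  push_cast
  ring
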